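/- arXiv:2201.04572 — 3 statements merged into one kernel-verified Lean document; each statement's English description precedes it below -/
import Mathlib

section
/- The function f(x,y) = ln(1 + a/x + b/y) is convex on the domain x > 0, y > 0, for any constants a > 0 and b > 0. -/
/-! `x ↦ a / x` and constants are log-convex on `(0, ∞)`, since `log (a / x) = log a - log x`.
Log-convexity is preserved by composition with linear maps and, by Hölder's inequality
`u₁ ^ t * v₁ ^ s + u₂ ^ t * v₂ ^ s ≤ (u₁ + u₂) ^ t * (v₁ + v₂) ^ s`, by sums. Hence
`1 + a / x + b / y` is log-convex on the open quadrant. -/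

open Real Set

lemma rpow_mul_rpow_add_rpow_mul_rpow_le {t s u₁ u₂ v₁ v₂ : ℝ} (ht : 0 ≤ t) (hs : 0 ≤ s)
    (hts : t + s = 1) (hu₁ : 0 < u₁) (hu₂ : 0 < u₂) (hv₁ : 0 < v₁) (hv₂ : 0 < v₂) :
    u₁ ^ t * v₁ ^ s + u₂ ^ t * v₂ ^ s ≤ (u₁ + u₂) ^ t * (v₁ + v₂) ^ s := by
  set U := u₁ + u₂
  set V := v₁ + v₂
  have hU : 0 < U := by positivity
  have hV : 0 < V := by positivity
  have term : ∀ u v : ℝ, 0 < u → 0 < v →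
      u ^ t * v ^ s ≤ U ^ t * V ^ s * (t * (u / U) + s * (v / V)) := by
    intro u v hu hv
    have amgm := geom_mean_le_arith_mean2_weighted ht hs (div_pos hu hU).le (div_pos hv hV).le hts
    rw [div_rpow hu.le hU.le, div_rpow hv.le hV.le, div_mul_div_comm,
      div_le_iff₀ (by positivity)] at amgm
    linarith
  have weights : t * (u₁ / U) + s * (v₁ / V) + (t * (u₂ / U) + s * (v₂ / V)) = 1 := by
    field_simp
    linear_combination U * V * hts
  calc u₁ ^ t * v₁ ^ s + u₂ ^ t * v₂ ^ s
      ≤ U ^ t * V ^ s * (t * (u₁ / U) + s * (v₁ / V))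
        + U ^ t * V ^ s * (t * (u₂ / U) + s * (v₂ / V)) :=
        add_le_add (term u₁ v₁ hu₁ hv₁) (term u₂ v₂ hu₂ hv₂)
    _ = U ^ t * V ^ s := by rw [← mul_add, weights, mul_one]

section LogConvex

variable {E : Type*} [AddCommGroup E] [Module ℝ E] {s : Set E} {f g : E → ℝ}

lemma ConvexOn.le_rpow_mul_rpow_of_log (hf₀ : ∀ x ∈ s, 0 < f x)
    (hf : ConvexOn ℝ s fun x => log (f x)) {x y : E} (hx : x ∈ s) (hy : y ∈ s) {a b : ℝ}
    (ha : 0 ≤ a) (hb : 0 ≤ b) (hab : a + b = 1) :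
    f (a • x + b • y) ≤ f x ^ a * f y ^ b := by
  have hfx := hf₀ x hx
  have hfy := hf₀ y hy
  rw [← log_le_log_iff (hf₀ _ (hf.1 hx hy ha hb hab)) (by positivity),
    log_mul (by positivity) (by positivity), log_rpow hfx, log_rpow hfy]
  simpa only [smul_eq_mul] using hf.2 hx hy ha hb hab

lemma ConvexOn.log_add (hf₀ : ∀ x ∈ s, 0 < f x) (hg₀ : ∀ x ∈ s, 0 < g x)
    (hf : ConvexOn ℝ s fun x => log (f x)) (hg : ConvexOn ℝ s fun x => log (g x)) :
    ConvexOn ℝ s fun x => log (f x + g x) := by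
  refine ⟨hf.1, fun x hx y hy a b ha hb hab => ?_⟩
  have hfx := hf₀ x hx
  have hfy := hf₀ y hy
  have hgx := hg₀ x hx
  have hgy := hg₀ y hy
  have hmem := hf.1 hx hy ha hb hab
  have hf₀z := hf₀ _ hmem
  have hg₀z := hg₀ _ hmem
  calc log (f (a • x + b • y) + g (a • x + b • y))
      ≤ log (f x ^ a * f y ^ b + g x ^ a * g y ^ b) :=
        log_le_log (by positivity) <| add_le_add
          (hf.le_rpow_mul_rpow_of_log hf₀ hx hy ha hb hab)
          (hg.le_rpow_mul_rpow_of_log hg₀ hx hy ha hb hab)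
    _ ≤ log ((f x + g x) ^ a * (f y + g y) ^ b) :=
        log_le_log (by positivity) <|
          rpow_mul_rpow_add_rpow_mul_rpow_le ha hb hab hfx hgx hfy hgy
    _ = a • log (f x + g x) + b • log (f y + g y) := by
        rw [log_mul (by positivity) (by positivity), log_rpow (by positivity),
          log_rpow (by positivity), smul_eq_mul, smul_eq_mul]

end LogConvex

lemma convexOn_log_const_div {c : ℝ} (hc : 0 < c) : ConvexOn ℝ (Ioi 0) fun x => log (c / x) :=
  (strictConcaveOn_log_Ioi.concaveOn.neg.add_const (log c)).congr fun x hx => by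
    rw [Pi.add_apply, Pi.neg_apply, log_div hc.ne' (ne_of_gt hx)]
    ring

/-- The function `f(x,y) = ln(1 + a/x + b/y)` is convex on the domain
`x > 0, y > 0`, for any constants `a > 0` and `b > 0`. -/
theorem stmt_0 (a b : ℝ) (ha : 0 < a) (hb : 0 < b) :
    ConvexOn ℝ {p : ℝ × ℝ | 0 < p.1 ∧ 0 < p.2}
      (fun p : ℝ × ℝ => Real.log (1 + a / p.1 + b / p.2)) := by
  have hK : Convex ℝ {p : ℝ × ℝ | 0 < p.1 ∧ 0 < p.2} := (convex_Ioi 0).prod (convex_Ioi 0)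
  have h₀ : ConvexOn ℝ {p : ℝ × ℝ | 0 < p.1 ∧ 0 < p.2} fun _ => log 1 := convexOn_const _ hK
  have h₁ : ConvexOn ℝ {p : ℝ × ℝ | 0 < p.1 ∧ 0 < p.2} fun p => log (a / p.1) :=
    ((convexOn_log_const_div ha).comp_linearMap (LinearMap.fst ℝ ℝ ℝ)).subset
      (fun _ hp => hp.1) hK
  have h₂ : ConvexOn ℝ {p : ℝ × ℝ | 0 < p.1 ∧ 0 < p.2} fun p => log (b / p.2) :=
    ((convexOn_log_const_div hb).comp_linearMap (LinearMap.snd ℝ ℝ ℝ)).subset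
      (fun _ hp => hp.2) hK
  exact (h₀.log_add (fun _ _ => one_pos) (fun _ hp => div_pos ha hp.1) h₁).log_add
    (fun _ hp => by have := div_pos ha hp.1; positivity) (fun _ hp => div_pos hb hp.2) h₂
end

section
/- The Hessian of f(x,y) = ln(1 + a/x + b/y) at any point (x,y) with x, y > 0 equals (1/u²) · [[2a y²/x + a²y²/x² + 2aby/x, −ab], [−ab, 2b x²/y + b²x²/y² + 2abx/y]], where u = xy + ay + bx, and this matrix is positive definite. -/
/-!
Freezing one variable, each slice of `f` has the form `t ↦ log (c + k / t)` with `c ≥ 0`,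
`k > 0`, whose derivative is `c / (c t + k) - 1 / t`; differentiating once more gives the
diagonal entries. For the mixed entry, `∂_y f = (x + a) / u - 1 / y`, and the `x`-derivative
of the Möbius function `x ↦ (x + a) / u` is `(u - (x + a)(y + b)) / u² = -ab / u²`.
Positive definiteness is Sylvester's criterion: the `(1,1)` entry is visibly positive, and
`x²y²` times the determinant is a polynomial with positive coefficients.
-/

open Real Filter Topology

theorem Matrix.posDef_fin_two_of_pos_of_det_pos {K : Type*} [Field K] [LinearOrder K]
    [IsStrictOrderedRing K] [StarRing K] [TrivialStar K] {p q r : K} (hp : 0 < p)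
    (hdet : 0 < p * r - q ^ 2) : !![p, q; q, r].PosDef := by
  refine Matrix.posDef_iff_dotProduct_mulVec.mpr ⟨?_, fun v hv => ?_⟩
  · ext i j
    fin_cases i <;> fin_cases j <;> simp
  simp only [star_trivial, dotProduct, Matrix.mulVec, Fin.sum_univ_two, Matrix.of_apply,
    Matrix.cons_val', Matrix.cons_val_zero, Matrix.cons_val_one, Matrix.empty_val',
    Matrix.cons_val_fin_one]
  rcases eq_or_ne (v 1) 0 with h1 | h1
  · have h0 : v 0 ≠ 0 := fun h0 => hv (funext fun i => by fin_cases i <;> simp [h0, h1])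
    have hQ : v 0 * (p * v 0 + q * v 1) + v 1 * (q * v 0 + r * v 1) = p * v 0 ^ 2 := by
      rw [h1]; ring
    rw [hQ]
    positivity
  · refine pos_of_mul_pos_right (a := p) ?_ hp.le
    have hsquare : p * (v 0 * (p * v 0 + q * v 1) + v 1 * (q * v 0 + r * v 1)) =
        (p * v 0 + q * v 1) ^ 2 + (p * r - q ^ 2) * v 1 ^ 2 := by ring
    rw [hsquare]
    positivity

theorem hasDerivAt_log_add_div {c k t : ℝ} (hc : 0 ≤ c) (hk : 0 < k) (ht : 0 < t) :
    HasDerivAt (fun s => log (c + k / s)) (c / (c * t + k) - 1 / t) t := by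
  have hq : HasDerivAt (fun s => c + k / s) (-(k / t ^ 2)) t := by
    simpa [div_eq_mul_inv] using ((hasDerivAt_inv ht.ne').const_mul k).const_add c
  refine (hq.log (by positivity)).congr_deriv ?_
  field_simp
  ring

theorem deriv_log_add_div_eventuallyEq {c k t : ℝ} (hc : 0 ≤ c) (hk : 0 < k) (ht : 0 < t) :
    deriv (fun s => log (c + k / s)) =ᶠ[𝓝 t] fun s => c / (c * s + k) - 1 / s := by
  filter_upwards [Ioi_mem_nhds ht] with s (hs : 0 < s)
  exact (hasDerivAt_log_add_div hc hk hs).deriv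

theorem deriv_deriv_log_add_div {c k t : ℝ} (hc : 0 ≤ c) (hk : 0 < k) (ht : 0 < t) :
    deriv (deriv fun s => log (c + k / s)) t = 1 / t ^ 2 - (c / (c * t + k)) ^ 2 := by
  rw [(deriv_log_add_div_eventuallyEq hc hk ht).deriv_eq]
  have hct : c * t + k ≠ 0 := by positivity
  have h : HasDerivAt (fun s => c / (c * s + k) - 1 / s)
      (1 / t ^ 2 - (c / (c * t + k)) ^ 2) t := by
    refine (((hasDerivAt_const t c).div (((hasDerivAt_id t).const_mul c).add_const k) hct).sub
      ((hasDerivAt_const t 1).div (hasDerivAt_id t) ht.ne')).congr_deriv ?_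
    simp only [id]
    field_simp
    ring
  exact h.deriv

theorem hasDerivAt_add_div_mul_add {p q r x : ℝ} (h : q * x + r ≠ 0) :
    HasDerivAt (fun s => (s + p) / (q * s + r)) ((r - p * q) / (q * x + r) ^ 2) x := by
  refine (((hasDerivAt_id x).add_const p).div (((hasDerivAt_id x).const_mul q).add_const r)
    h).congr_deriv ?_
  simp only [id]
  ring

theorem deriv_deriv_log_one_add_div_add_div {a b x y : ℝ} (ha : 0 < a) (hb : 0 < b)
    (hx : 0 < x) (hy : 0 < y) :
    deriv (fun s => deriv (fun t => log (1 + a / s + b / t)) y) x =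
      -(a * b) / (x * y + a * y + b * x) ^ 2 := by
  have hinner : (fun s => deriv (fun t => log (1 + a / s + b / t)) y) =ᶠ[𝓝 x]
      fun s => (s + a) / ((y + b) * s + a * y) - 1 / y := by
    filter_upwards [Ioi_mem_nhds hx] with s (hs : 0 < s)
    rw [(hasDerivAt_log_add_div (by positivity) hb hy).deriv]
    field_simp
    ring
  rw [hinner.deriv_eq,
    ((hasDerivAt_add_div_mul_add (by positivity)).sub_const (1 / y)).deriv]
  ring

/-- The Hessian of `f(x,y) = ln(1 + a/x + b/y)` at any point `(x,y)` with
`x, y > 0` equals `(1/u²) · [[2a y²/x + a²y²/x² + 2aby/x, −ab], [−ab,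
2b x²/y + b²x²/y² + 2abx/y]]` where `u = xy + ay + bx`, and this matrix is
positive definite. -/
theorem stmt_3 (a b x y : ℝ) (ha : 0 < a) (hb : 0 < b) (hx : 0 < x) (hy : 0 < y) :
    (deriv (fun s : ℝ => deriv (fun t : ℝ => Real.log (1 + a / t + b / y)) s) x =
        (1 / (x * y + a * y + b * x) ^ 2) *
          (2 * a * y ^ 2 / x + a ^ 2 * y ^ 2 / x ^ 2 + 2 * a * b * y / x) ∧
      deriv (fun s : ℝ => deriv (fun t : ℝ => Real.log (1 + a / x + b / t)) s) y =
        (1 / (x * y + a * y + b * x) ^ 2) *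
          (2 * b * x ^ 2 / y + b ^ 2 * x ^ 2 / y ^ 2 + 2 * a * b * x / y) ∧
      deriv (fun s : ℝ => deriv (fun t : ℝ => Real.log (1 + a / s + b / t)) y) x =
        (1 / (x * y + a * y + b * x) ^ 2) * (-(a * b)) ∧
      deriv (fun t : ℝ => deriv (fun s : ℝ => Real.log (1 + a / s + b / t)) x) y =
        (1 / (x * y + a * y + b * x) ^ 2) * (-(a * b))) ∧
    Matrix.PosDef
      ((1 / (x * y + a * y + b * x) ^ 2) •
        !![2 * a * y ^ 2 / x + a ^ 2 * y ^ 2 / x ^ 2 + 2 * a * b * y / x, -(a * b);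
           -(a * b), 2 * b * x ^ 2 / y + b ^ 2 * x ^ 2 / y ^ 2 + 2 * a * b * x / y]) := by
  refine ⟨⟨?_, ?_, ?_, ?_⟩, ?_⟩
  · simp_rw [add_right_comm (1 : ℝ) (a / _)]
    rw [deriv_deriv_log_add_div (by positivity) ha hx]
    field_simp
    ring
  · rw [deriv_deriv_log_add_div (by positivity) hb hy]
    field_simp
    ring
  · rw [deriv_deriv_log_one_add_div_add_div ha hb hx hy]
    ring
  · simp_rw [add_right_comm (1 : ℝ) (a / _)]
    rw [deriv_deriv_log_one_add_div_add_div hb ha hy hx]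
    ring
  · refine .smul (Matrix.posDef_fin_two_of_pos_of_det_pos (by positivity) ?_) (by positivity)
    have hdet : (2 * a * y ^ 2 / x + a ^ 2 * y ^ 2 / x ^ 2 + 2 * a * b * y / x) *
          (2 * b * x ^ 2 / y + b ^ 2 * x ^ 2 / y ^ 2 + 2 * a * b * x / y) - (-(a * b)) ^ 2 =
        a * b * (4 * x ^ 3 * y ^ 3 + 6 * b * x ^ 3 * y ^ 2 + 6 * a * x ^ 2 * y ^ 3 +
          2 * a ^ 2 * x * y ^ 3 + 2 * b ^ 2 * x ^ 3 * y + 4 * a * b * x ^ 2 * y ^ 2) /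
          (x ^ 2 * y ^ 2) := by
      field_simp
      ring
    rw [hdet]
    positivity
end

section
/- If X₁ and X₂ are independent exponential random variables with means Ω₁p and Ω₂q (p, q, Ω₁, Ω₂ > 0, Ω₁p ≠ Ω₂q), then as Ω₁ = c₁t, Ω₂ = c₂t with t → ∞ (c₁, c₂ fixed positive constants), t² · P(X₁ + X₂ < T) converges to T²/(2 p q c₁ c₂) for fixed T > 0. -/
/-!
On the open triangle `{x, y > 0, x + y < T}`, of area `T² / 2`, the joint density
`r₁ r₂ e^{-(r₁ x + r₂ y)}` of two independent exponential laws lies between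
`r₁ r₂ e^{-(r₁ + r₂) T}` and `r₁ r₂`, and off the positive quadrant it vanishes. With rates
`rᵢ ~ 1 / t`, both bounds multiplied by `t²` tend to `T² / (2 p q c₁ c₂)`.
-/

open MeasureTheory ProbabilityTheory Filter Real Set Topology

-- Changing the density at the single point `0` makes the triangle below open, i.e. a `regionBetween`.
lemma expMeasure_eq_withDensity_indicator (r : ℝ) :
    expMeasure r =
      volume.withDensity ((Ioi 0).indicator fun x ↦ ENNReal.ofReal (r * exp (-(r * x)))) := by
  refine withDensity_congr_ae ?_
  filter_upwards [Measure.ae_ne volume 0] with x hx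
  change exponentialPDF r x = _
  rcases hx.lt_or_gt with hneg | hpos
  · simp [exponentialPDF_of_neg hneg, hneg.not_gt]
  · simp [exponentialPDF_of_nonneg hpos.le, hpos]

lemma expMeasure_prod_eq_withDensity {r₁ : ℝ} (hr₁ : 0 ≤ r₁) (r₂ : ℝ) :
    (expMeasure r₁).prod (expMeasure r₂) = volume.withDensity ((Ioi 0 ×ˢ Ioi 0).indicator
      fun z : ℝ × ℝ ↦ ENNReal.ofReal (r₁ * r₂ * exp (-(r₁ * z.1 + r₂ * z.2)))) := by
  rw [expMeasure_eq_withDensity_indicator, expMeasure_eq_withDensity_indicator,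
    prod_withDensity ((by fun_prop : Measurable _).indicator measurableSet_Ioi)
      ((by fun_prop : Measurable _).indicator measurableSet_Ioi), ← Measure.volume_eq_prod]
  congr 1
  ext z
  simp only [indicator_apply, mem_prod, mem_Ioi]
  by_cases h : 0 < z.1 ∧ 0 < z.2
  · rw [if_pos h.1, if_pos h.2, if_pos h, ← ENNReal.ofReal_mul (by positivity), neg_add, exp_add]
    ring_nf
  · rcases not_and_or.mp h with h | h <;> simp [h]

lemma regionBetween_zero_sub_eq (T : ℝ) :
    regionBetween 0 (fun x ↦ T - x) (Ioo 0 T) = {z : ℝ × ℝ | z.1 + z.2 < T} ∩ Ioi 0 ×ˢ Ioi 0 := by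
  ext ⟨x, y⟩
  simp only [regionBetween, mem_ofPred_eq, mem_Ioo, mem_inter_iff, mem_prod, mem_Ioi,
    Pi.zero_apply]
  constructor
  · rintro ⟨⟨hx, -⟩, hy, hxy⟩
    exact ⟨by linarith, hx, hy⟩
  · rintro ⟨hxy, hx, hy⟩
    exact ⟨⟨hx, by linarith⟩, hy, by linarith⟩

lemma volume_regionBetween_zero_sub {T : ℝ} (hT : 0 ≤ T) :
    volume (regionBetween 0 (fun x ↦ T - x) (Ioo 0 T)) = ENNReal.ofReal (T ^ 2 / 2) := by
  rw [Measure.volume_eq_prod, volume_regionBetween_eq_integral (integrable_zero ℝ ℝ _).integrableOn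
    ((by fun_prop : Continuous fun x : ℝ ↦ T - x).integrableOn_Icc.mono_set Ioo_subset_Icc_self)
    measurableSet_Ioo (fun x hx ↦ by simpa using hx.2.le)]
  rw [← integral_Ioc_eq_integral_Ioo, ← intervalIntegral.integral_of_le hT,
    sub_zero, intervalIntegral.integral_comp_sub_left (fun x ↦ x), integral_id]
  ring_nf

section

variable {r₁ r₂ T : ℝ}

lemma expMeasure_prod_sum_lt_eq_setLIntegral (hr₁ : 0 ≤ r₁) :
    (expMeasure r₁).prod (expMeasure r₂) {z | z.1 + z.2 < T} =
      ∫⁻ z in regionBetween 0 (fun x ↦ T - x) (Ioo 0 T),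
        ENNReal.ofReal (r₁ * r₂ * exp (-(r₁ * z.1 + r₂ * z.2))) := by
  rw [expMeasure_prod_eq_withDensity hr₁, withDensity_apply _
      (measurableSet_lt (by fun_prop) measurable_const),
    setLIntegral_indicator (measurableSet_Ioi.prod measurableSet_Ioi), inter_comm,
    regionBetween_zero_sub_eq]

lemma exp_neg_mem_Icc_of_mem_regionBetween (hr₁ : 0 ≤ r₁) (hr₂ : 0 ≤ r₂) {z : ℝ × ℝ}
    (hz : z ∈ regionBetween 0 (fun x ↦ T - x) (Ioo 0 T)) :
    exp (-(r₁ * z.1 + r₂ * z.2)) ∈ Icc (exp (-((r₁ + r₂) * T))) 1 := by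
  obtain ⟨⟨hx₀, hxT⟩, hy₀, hyT⟩ := hz
  simp only [Pi.zero_apply] at hy₀ hyT
  refine ⟨exp_le_exp.mpr ?_, exp_le_one_iff.mpr ?_⟩ <;> nlinarith

lemma expMeasure_prod_sum_lt_le (hr₁ : 0 ≤ r₁) (hr₂ : 0 ≤ r₂) (hT : 0 ≤ T) :
    (expMeasure r₁).prod (expMeasure r₂) {z | z.1 + z.2 < T} ≤
      ENNReal.ofReal (r₁ * r₂ * (T ^ 2 / 2)) := by
  rw [expMeasure_prod_sum_lt_eq_setLIntegral hr₁, ENNReal.ofReal_mul (by positivity),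
    ← volume_regionBetween_zero_sub hT, ← setLIntegral_const]
  refine setLIntegral_mono measurable_const fun z hz ↦ ENNReal.ofReal_le_ofReal ?_
  have := (exp_neg_mem_Icc_of_mem_regionBetween hr₁ hr₂ hz).2
  have : 0 ≤ r₁ * r₂ := by positivity
  nlinarith

lemma le_expMeasure_prod_sum_lt (hr₁ : 0 ≤ r₁) (hr₂ : 0 ≤ r₂) (hT : 0 ≤ T) :
    ENNReal.ofReal (r₁ * r₂ * exp (-((r₁ + r₂) * T)) * (T ^ 2 / 2)) ≤
      (expMeasure r₁).prod (expMeasure r₂) {z | z.1 + z.2 < T} := by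
  rw [expMeasure_prod_sum_lt_eq_setLIntegral hr₁, ENNReal.ofReal_mul (by positivity),
    ← volume_regionBetween_zero_sub hT, ← setLIntegral_const]
  refine setLIntegral_mono (by fun_prop) fun z hz ↦ ENNReal.ofReal_le_ofReal ?_
  exact mul_le_mul_of_nonneg_left (exp_neg_mem_Icc_of_mem_regionBetween hr₁ hr₂ hz).1
    (by positivity)

lemma toReal_expMeasure_prod_sum_lt_mem_Icc (hr₁ : 0 ≤ r₁) (hr₂ : 0 ≤ r₂) (hT : 0 ≤ T) :
    ((expMeasure r₁).prod (expMeasure r₂) {z | z.1 + z.2 < T}).toReal ∈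
      Icc (r₁ * r₂ * exp (-((r₁ + r₂) * T)) * (T ^ 2 / 2)) (r₁ * r₂ * (T ^ 2 / 2)) := by
  have hle := expMeasure_prod_sum_lt_le hr₁ hr₂ hT
  refine ⟨(ENNReal.ofReal_le_iff_le_toReal (ne_top_of_le_ne_top ENNReal.ofReal_ne_top hle)).mp
    (le_expMeasure_prod_sum_lt hr₁ hr₂ hT), ENNReal.toReal_le_of_le_ofReal (by positivity) hle⟩

end

lemma tendsto_one_div_mul_mul_atTop_zero {a b : ℝ} (ha : 0 < a) (hb : 0 < b) :
    Tendsto (fun t : ℝ ↦ 1 / (a * t * b)) atTop (𝓝 0) :=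
  tendsto_const_nhds.div_atTop ((tendsto_id.const_mul_atTop ha).atTop_mul_const hb)

theorem stmt_10_general (p q c₁ c₂ T : ℝ) (hp : 0 < p) (hq : 0 < q)
    (hc₁ : 0 < c₁) (hc₂ : 0 < c₂) (hT : 0 < T) :
    Tendsto
      (fun t : ℝ => t ^ 2 *
        (((expMeasure (1 / (c₁ * t * p))).prod (expMeasure (1 / (c₂ * t * q))))
          {z : ℝ × ℝ | z.1 + z.2 < T}).toReal)
      atTop (nhds (T ^ 2 / (2 * p * q * c₁ * c₂))) := by
  set K := T ^ 2 / (2 * p * q * c₁ * c₂)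
  have hlower : Tendsto (fun t : ℝ ↦ K * exp (-((1 / (c₁ * t * p) + 1 / (c₂ * t * q)) * T)))
      atTop (𝓝 K) := by
    simpa using (((tendsto_one_div_mul_mul_atTop_zero hc₁ hp).add
      (tendsto_one_div_mul_mul_atTop_zero hc₂ hq)).mul_const T).neg.rexp.const_mul K
  refine tendsto_of_tendsto_of_tendsto_of_le_of_le' hlower tendsto_const_nhds ?_ ?_ <;>
    filter_upwards [eventually_gt_atTop 0] with t ht <;>
    obtain ⟨hlo, hhi⟩ := toReal_expMeasure_prod_sum_lt_mem_Icc
      (one_div_pos.mpr (by positivity : 0 < c₁ * t * p)).le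
      (one_div_pos.mpr (by positivity : 0 < c₂ * t * q)).le hT.le <;>
    have hK : t ^ 2 * (1 / (c₁ * t * p) * (1 / (c₂ * t * q)) * (T ^ 2 / 2)) = K := by
      simp only [K]
      field_simp
  · calc K * exp (-((1 / (c₁ * t * p) + 1 / (c₂ * t * q)) * T))
        = t ^ 2 * (1 / (c₁ * t * p) * (1 / (c₂ * t * q)) *
            exp (-((1 / (c₁ * t * p) + 1 / (c₂ * t * q)) * T)) * (T ^ 2 / 2)) := by
          rw [← hK]; ring
      _ ≤ _ := by gcongr
  · exact (mul_le_mul_of_nonneg_left hhi (sq_nonneg t)).trans_eq hK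

/-- If `X₁` and `X₂` are independent exponential random variables with means
`Ω₁p` and `Ω₂q` (`p, q, Ω₁, Ω₂ > 0`, `Ω₁p ≠ Ω₂q`), then as `Ω₁ = c₁t`,
`Ω₂ = c₂t` with `t → ∞` (`c₁, c₂` fixed positive constants),
`t² · P(X₁ + X₂ < T)` converges to `T²/(2 p q c₁ c₂)` for fixed `T > 0`.
Independence is modeled by the product of the two exponential laws. -/
theorem stmt_10 (p q c₁ c₂ T : ℝ) (hp : 0 < p) (hq : 0 < q)
    (hc₁ : 0 < c₁) (hc₂ : 0 < c₂) (hT : 0 < T) (hne : c₁ * p ≠ c₂ * q) :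
    Tendsto
      (fun t : ℝ => t ^ 2 *
        (((expMeasure (1 / (c₁ * t * p))).prod (expMeasure (1 / (c₂ * t * q))))
          {z : ℝ × ℝ | z.1 + z.2 < T}).toReal)
      atTop (nhds (T ^ 2 / (2 * p * q * c₁ * c₂))) :=
  stmt_10_general p q c₁ c₂ T hp hq hc₁ hc₂ hT
end
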